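/- Let A and B be n × n real positive definite correlation matrices (unit diagonal) whose eigenvalues all lie in [m, M] with 0 < m ≤ M. Then A^{1/2} ∘ B^{1/2} ≥ (2√(mM)/(m + M)) I_n in the Loewner order. -/

import Mathlib

open Matrix

section
open scoped ComplexOrder

/-- The square root of a positive semidefinite matrix, as defined in the older Mathlib
(`Matrix.PosSemidef.sqrt`, removed since). -/
noncomputable def Matrix.PosSemidef.sqrt {n 𝕜 : Type*} [Fintype n] [RCLike 𝕜] [DecidableEq n]
    {A : Matrix n n 𝕜} (hA : A.PosSemidef) : Matrix n n 𝕜 :=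
  hA.1.eigenvectorUnitary.1 * diagonal ((↑) ∘ (√·) ∘ hA.1.eigenvalues) *
    (star hA.1.eigenvectorUnitary : Matrix n n 𝕜)

end

/-!
Diagonalize `A = U diag(λ) Uᴴ` and `B = V diag(μ) Vᴴ`. In the joint eigenbasis `U ⊗ V`,
the matrix `√A ⊗ √B - r (A ⊗ 1 + 1 ⊗ B)` with `r = √(mM)/(m+M)` is diagonal with entries
`√(λₖ μₗ) - r (λₖ + μₗ)`, which are nonnegative for `λₖ, μₗ ∈ [m, M]`. The Hadamard product is
the principal submatrix of the Kronecker product on the diagonal `{(i, i)}`, so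
`√A ∘ √B - r (A ∘ 1 + 1 ∘ B)` is positive semidefinite, and for correlation matrices
`A ∘ 1 = 1 ∘ B = 1`.
-/

open scoped Kronecker ComplexOrder

theorem mul_mul_sq_add_sq_le_sq_add_sq_mul_mul {a b p q : ℝ} (ha : 0 ≤ a)
    (hp : p ∈ Set.Icc a b) (hq : q ∈ Set.Icc a b) :
    a * b * (p ^ 2 + q ^ 2) ≤ (a ^ 2 + b ^ 2) * (p * q) := by
  have hp0 : 0 ≤ p := ha.trans hp.1
  have hq0 : 0 ≤ q := ha.trans hq.1
  have haq : a * q ≤ b * p := by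
    nlinarith [mul_le_mul_of_nonneg_right hp.1 hq0, mul_le_mul_of_nonneg_left hq.2 hp0]
  have hap : a * p ≤ b * q := by
    nlinarith [mul_le_mul_of_nonneg_right hq.1 hp0, mul_le_mul_of_nonneg_left hp.2 hq0]
  -- `(a² + b²) p q - a b (p² + q²) = (b p - a q) (b q - a p)`
  nlinarith [mul_nonneg (sub_nonneg.2 haq) (sub_nonneg.2 hap)]

theorem Real.sqrt_mul_div_add_mul_add_le_sqrt_mul_sqrt {m M x y : ℝ} (hm : 0 < m)
    (hx : x ∈ Set.Icc m M) (hy : y ∈ Set.Icc m M) :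
    √(m * M) / (m + M) * (x + y) ≤ √x * √y := by
  have hM : 0 < M := hm.trans_le (hx.1.trans hx.2)
  have key := mul_mul_sq_add_sq_le_sq_add_sq_mul_mul (Real.sqrt_nonneg m)
    ⟨Real.sqrt_le_sqrt hx.1, Real.sqrt_le_sqrt hx.2⟩
    ⟨Real.sqrt_le_sqrt hy.1, Real.sqrt_le_sqrt hy.2⟩
  rw [Real.sq_sqrt hm.le, Real.sq_sqrt hM.le, Real.sq_sqrt (hm.le.trans hx.1),
    Real.sq_sqrt (hm.le.trans hy.1)] at key
  rw [Real.sqrt_mul hm.le, div_mul_eq_mul_div, div_le_iff₀ (by positivity)]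
  linarith

theorem Matrix.mul_mul_conjTranspose_kronecker {R ι κ : Type*} [CommRing R] [StarRing R]
    [Fintype ι] [Fintype κ] (U X : Matrix ι ι R) (V Y : Matrix κ κ R) :
    (U * X * Uᴴ) ⊗ₖ (V * Y * Vᴴ) = (U ⊗ₖ V) * (X ⊗ₖ Y) * (U ⊗ₖ V)ᴴ := by
  rw [mul_kronecker_mul, mul_kronecker_mul, conjTranspose_kronecker]

section

variable {𝕜 ι κ : Type*} [RCLike 𝕜] [Fintype ι] [DecidableEq ι] [Fintype κ] [DecidableEq κ]
  {A : Matrix ι ι 𝕜}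

theorem Matrix.IsHermitian.eq_conj_diagonal_eigenvalues (hA : A.IsHermitian) :
    A = hA.eigenvectorUnitary.1 * diagonal ((↑) ∘ hA.eigenvalues) *
      (hA.eigenvectorUnitary.1)ᴴ := by
  simpa [star_eq_conjTranspose] using hA.spectral_theorem

theorem Matrix.IsHermitian.eigenvectorUnitary_mul_conjTranspose (hA : A.IsHermitian) :
    hA.eigenvectorUnitary.1 * (hA.eigenvectorUnitary.1)ᴴ = 1 := by
  simp [← star_eq_conjTranspose]

theorem Matrix.PosSemidef.sqrt_eq_conj_diagonal (hA : A.PosSemidef) :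
    hA.sqrt = hA.1.eigenvectorUnitary.1 * diagonal ((↑) ∘ (√·) ∘ hA.1.eigenvalues) *
      (hA.1.eigenvectorUnitary.1)ᴴ :=
  rfl

theorem Matrix.PosSemidef.sqrt_kronecker_sqrt_sub {B : Matrix κ κ 𝕜} (hA : A.PosSemidef)
    (hB : B.PosSemidef) {m M : ℝ} (hm : 0 < m) (hAmM : spectrum ℝ A ⊆ Set.Icc m M)
    (hBmM : spectrum ℝ B ⊆ Set.Icc m M) :
    (hA.sqrt ⊗ₖ hB.sqrt - (√(m * M) / (m + M)) • (A ⊗ₖ 1 + 1 ⊗ₖ B)).PosSemidef := by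
  set U := hA.1.eigenvectorUnitary.1
  set V := hB.1.eigenvectorUnitary.1
  set α := hA.1.eigenvalues
  set β := hB.1.eigenvalues
  have hsqrt : hA.sqrt ⊗ₖ hB.sqrt =
      (U ⊗ₖ V) * diagonal (fun p => ((√(α p.1) * √(β p.2) : ℝ) : 𝕜)) * (U ⊗ₖ V)ᴴ := by
    rw [hA.sqrt_eq_conj_diagonal, hB.sqrt_eq_conj_diagonal, mul_mul_conjTranspose_kronecker,
      diagonal_kronecker_diagonal]
    congr with p
    exact (RCLike.ofReal_mul _ _).symm
  have hleft : A ⊗ₖ 1 = (U ⊗ₖ V) * diagonal (fun p => ((α p.1 : ℝ) : 𝕜)) * (U ⊗ₖ V)ᴴ := by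
    calc A ⊗ₖ 1 = (U * diagonal ((↑) ∘ α) * Uᴴ) ⊗ₖ (V * 1 * Vᴴ) := by
          rw [← hA.1.eq_conj_diagonal_eigenvalues, mul_one,
            hB.1.eigenvectorUnitary_mul_conjTranspose]
      _ = _ := by
          rw [mul_mul_conjTranspose_kronecker, ← diagonal_one, diagonal_kronecker_diagonal]
          congr with p
          simp
  have hright : 1 ⊗ₖ B = (U ⊗ₖ V) * diagonal (fun p => ((β p.2 : ℝ) : 𝕜)) * (U ⊗ₖ V)ᴴ := by
    calc 1 ⊗ₖ B = (U * 1 * Uᴴ) ⊗ₖ (V * diagonal ((↑) ∘ β) * Vᴴ) := by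
          rw [← hB.1.eq_conj_diagonal_eigenvalues, mul_one,
            hA.1.eigenvectorUnitary_mul_conjTranspose]
      _ = _ := by
          rw [mul_mul_conjTranspose_kronecker, ← diagonal_one, diagonal_kronecker_diagonal]
          congr with p
          simp
  rw [hsqrt, hleft, hright, ← Matrix.add_mul, ← Matrix.mul_add, ← Matrix.smul_mul,
    ← Matrix.mul_smul, ← Matrix.sub_mul, ← Matrix.mul_sub, diagonal_add, ← diagonal_smul,
    diagonal_sub]
  refine (posSemidef_diagonal_iff.2 fun p => ?_).mul_mul_conjTranspose_same _
  have hcoeff := Real.sqrt_mul_div_add_mul_add_le_sqrt_mul_sqrt hm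
    (hAmM (hA.1.eigenvalues_mem_spectrum_real p.1)) (hBmM (hB.1.eigenvalues_mem_spectrum_real p.2))
  simp only [Pi.smul_apply, RCLike.real_smul_eq_coe_mul]
  norm_cast
  simpa [sub_nonneg] using hcoeff

theorem Matrix.PosSemidef.sqrt_hadamard_sqrt_sub {B : Matrix ι ι 𝕜} (hA : A.PosSemidef)
    (hB : B.PosSemidef) {m M : ℝ} (hm : 0 < m) (hAmM : spectrum ℝ A ⊆ Set.Icc m M)
    (hBmM : spectrum ℝ B ⊆ Set.Icc m M) :
    (hA.sqrt ⊙ hB.sqrt - (√(m * M) / (m + M)) • (A ⊙ 1 + 1 ⊙ B)).PosSemidef :=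
  (hA.sqrt_kronecker_sqrt_sub hB hm hAmM hBmM).submatrix fun i => (i, i)

end

theorem reverse_kantorovich_hadamard_general {n : ℕ} (A B : Matrix (Fin n) (Fin n) ℝ)
    (hA : A.PosDef) (hB : B.PosDef)
    (hdA : ∀ i, A i i = 1) (hdB : ∀ i, B i i = 1)
    (m M : ℝ) (hm : 0 < m)
    (hspecA : spectrum ℝ A ⊆ Set.Icc m M) (hspecB : spectrum ℝ B ⊆ Set.Icc m M) :
    (Matrix.hadamard hA.posSemidef.sqrt hB.posSemidef.sqrt -
      (2 * Real.sqrt (m * M) / (m + M)) • (1 : Matrix (Fin n) (Fin n) ℝ)).PosSemidef := by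
  have hA1 : A ⊙ 1 = 1 := hadamard_one_eq_one_iff.2 (funext hdA)
  have h1B : 1 ⊙ B = 1 := by rw [hadamard_comm]; exact hadamard_one_eq_one_iff.2 (funext hdB)
  have hconst : (2 * √(m * M) / (m + M)) • (1 : Matrix (Fin n) (Fin n) ℝ) =
      (√(m * M) / (m + M)) • (A ⊙ 1 + 1 ⊙ B) := by
    rw [hA1, h1B, ← two_smul ℝ, smul_smul]
    ring_nf
  rw [hconst]
  exact hA.posSemidef.sqrt_hadamard_sqrt_sub hB.posSemidef hm hspecA hspecB

/-- Reverse Kantorovich inequality for Hadamard products of correlation matrices: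
`A^{1/2} ∘ B^{1/2} ≥ (2√(mM)/(m+M)) I`. -/
theorem reverse_kantorovich_hadamard {n : ℕ} (A B : Matrix (Fin n) (Fin n) ℝ)
    (hA : A.PosDef) (hB : B.PosDef)
    (hdA : ∀ i, A i i = 1) (hdB : ∀ i, B i i = 1)
    (m M : ℝ) (hm : 0 < m) (hmM : m ≤ M)
    (hspecA : spectrum ℝ A ⊆ Set.Icc m M) (hspecB : spectrum ℝ B ⊆ Set.Icc m M) :
    (Matrix.hadamard hA.posSemidef.sqrt hB.posSemidef.sqrt -
      (2 * Real.sqrt (m * M) / (m + M)) • (1 : Matrix (Fin n) (Fin n) ℝ)).PosSemidef :=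
  reverse_kantorovich_hadamard_general A B hA hB hdA hdB m M hm hspecA hspecB
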